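/- For all real numbers q1, q2 > 0 and every integer N ≥ 2, one has Γ(N)/Γ(q1+q2+N) < Γ(N)²/(Γ(q1+N)·Γ(q2+N)), where Γ denotes the Gamma function. -/
import Mathlib

theorem gamma_ratio_strict_lt (q1 q2 : ℝ) (hq1 : 0 < q1) (hq2 : 0 < q2)
    (N : ℕ) (hN : 2 ≤ N) :
    Real.Gamma N / Real.Gamma (q1 + q2 + N) <
      Real.Gamma N ^ 2 / (Real.Gamma (q1 + N) * Real.Gamma (q2 + N)) := by
  have hN0 : (0:ℝ) < N := by
    have : 0 < N := lt_of_lt_of_le two_pos hN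
    exact_mod_cast this
  have hs : 0 < q1 + q2 := by linarith
  have hD0 : (0:ℝ) < q1 + q2 + N := by linarith
  have h10 : (0:ℝ) < q1 + N := by linarith
  have h20 : (0:ℝ) < q2 + N := by linarith
  have hGN := Real.Gamma_pos_of_pos hN0
  have hGD := Real.Gamma_pos_of_pos hD0
  have hG1 := Real.Gamma_pos_of_pos h10
  have hG2 := Real.Gamma_pos_of_pos h20
  -- log-recurrence
  have hlogmul : ∀ x : ℝ, 0 < x →
      Real.log (Real.Gamma (x + 1)) = Real.log x + Real.log (Real.Gamma x) := by
    intro x hx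
    rw [Real.Gamma_add_one hx.ne', Real.log_mul hx.ne' (Real.Gamma_pos_of_pos hx).ne']
  have hA := hlogmul _ hN0
  have hB := hlogmul _ h10
  have hC := hlogmul _ h20
  have hD := hlogmul _ hD0
  -- convexity of log ∘ Gamma applied at N+1 and q1+q2+N+1
  have hconv := Real.convexOn_log_Gamma
  have hmemx : (N:ℝ) + 1 ∈ Set.Ioi (0:ℝ) := Set.mem_Ioi.mpr (by linarith)
  have hmemy : q1 + q2 + (N:ℝ) + 1 ∈ Set.Ioi (0:ℝ) := Set.mem_Ioi.mpr (by linarith)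
  have hc1 : (0:ℝ) ≤ q2 / (q1 + q2) := by positivity
  have hc2 : (0:ℝ) ≤ q1 / (q1 + q2) := by positivity
  have hsum : q2 / (q1 + q2) + q1 / (q1 + q2) = 1 := by field_simp; ring
  have hsum' : q1 / (q1 + q2) + q2 / (q1 + q2) = 1 := by field_simp
  have h1 := hconv.2 hmemx hmemy hc1 hc2 hsum
  have h2 := hconv.2 hmemx hmemy hc2 hc1 hsum'
  have e1 : (q2 / (q1 + q2)) • ((N:ℝ) + 1) + (q1 / (q1 + q2)) • (q1 + q2 + (N:ℝ) + 1)
      = q1 + (N:ℝ) + 1 := by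
    simp only [smul_eq_mul]
    field_simp
    ring
  have e2 : (q1 / (q1 + q2)) • ((N:ℝ) + 1) + (q2 / (q1 + q2)) • (q1 + q2 + (N:ℝ) + 1)
      = q2 + (N:ℝ) + 1 := by
    simp only [smul_eq_mul]
    field_simp
    ring
  rw [e1] at h1
  rw [e2] at h2
  simp only [Function.comp_apply, smul_eq_mul] at h1 h2
  -- combine the two convexity estimates
  have hXY : q2 / (q1 + q2) * Real.log (Real.Gamma ((N:ℝ) + 1))
      + q1 / (q1 + q2) * Real.log (Real.Gamma (q1 + q2 + (N:ℝ) + 1))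
      + (q1 / (q1 + q2) * Real.log (Real.Gamma ((N:ℝ) + 1))
        + q2 / (q1 + q2) * Real.log (Real.Gamma (q1 + q2 + (N:ℝ) + 1)))
      = Real.log (Real.Gamma ((N:ℝ) + 1)) + Real.log (Real.Gamma (q1 + q2 + (N:ℝ) + 1)) := by
    linear_combination (Real.log (Real.Gamma ((N:ℝ) + 1))
      + Real.log (Real.Gamma (q1 + q2 + (N:ℝ) + 1))) * hsum
  have hsum2 : Real.log (Real.Gamma (q1 + (N:ℝ) + 1)) + Real.log (Real.Gamma (q2 + (N:ℝ) + 1))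
      ≤ Real.log (Real.Gamma ((N:ℝ) + 1)) + Real.log (Real.Gamma (q1 + q2 + (N:ℝ) + 1)) := by
    linarith
  -- strict gap from the recurrence factors
  have hstrict : Real.log (N:ℝ) + Real.log (q1 + q2 + N) <
      Real.log (q1 + N) + Real.log (q2 + N) := by
    rw [← Real.log_mul hN0.ne' hD0.ne', ← Real.log_mul h10.ne' h20.ne']
    apply Real.log_lt_log (by positivity)
    nlinarith
  have hlog : Real.log (Real.Gamma (q1 + N)) + Real.log (Real.Gamma (q2 + N)) <
      Real.log (Real.Gamma N) + Real.log (Real.Gamma (q1 + q2 + N)) := by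
    rw [hA, hD, hB, hC] at hsum2
    linarith
  have key : Real.Gamma (q1 + N) * Real.Gamma (q2 + N) < Real.Gamma N * Real.Gamma (q1 + q2 + N) := by
    have hl : Real.log (Real.Gamma (q1 + N) * Real.Gamma (q2 + N)) <
        Real.log (Real.Gamma N * Real.Gamma (q1 + q2 + N)) := by
      rw [Real.log_mul hG1.ne' hG2.ne', Real.log_mul hGN.ne' hGD.ne']
      exact hlog
    exact (Real.log_lt_log_iff (by positivity) (by positivity)).mp hl
  rw [div_lt_div_iff₀ hGD (by positivity)]
  exact lt_of_lt_of_eq (mul_lt_mul_of_pos_left key hGN) (by ring)
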